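/- Let k ≥ 2 and n ≥ 1 be integers, and let H_{n,k} be the graph obtained from the complete graph K_n by attaching exactly k+1 new pendant vertices (leaves) to each vertex of K_n. Then the maximum number of vertices of an induced subgraph of H_{n,k} that is a forest of caterpillars of maximum degree at most k equals (k+1)·n. -/
import Mathlib


/-- A graph is a forest of caterpillars if it is acyclic and the set of its
vertices of degree at least 2 induces a subgraph of maximum degree at most 2
(equivalently, every connected component is a caterpillar). -/
def IsCaterpillarForest {α : Type*} (H : SimpleGraph α) : Prop :=
  H.IsAcyclic ∧ ∀ v, 2 ≤ (H.neighborSet v).ncard →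
    {w ∈ H.neighborSet v | 2 ≤ (H.neighborSet w).ncard}.ncard ≤ 2

/-- For the graph H_{n,k} obtained from K_n by attaching k+1 pendant leaves to each
vertex, the maximum number of vertices of an induced forest of caterpillars of maximum
degree at most k equals (k+1)·n. Vertices are pairs (v, i) with v ∈ Fin n and
i ∈ Fin (k+2), where i = 0 marks the clique vertices. -/
theorem stmt17 (k n : ℕ) (hk : 2 ≤ k) (hn : 1 ≤ n)
    (H : SimpleGraph (Fin n × Fin (k+2)))
    (hH : ∀ a b, H.Adj a b ↔
      ((a.1 = b.1 ∧ ((a.2 = 0 ∧ b.2 ≠ 0) ∨ (a.2 ≠ 0 ∧ b.2 = 0))) ∨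
        (a.1 ≠ b.1 ∧ a.2 = 0 ∧ b.2 = 0))) :
    IsGreatest {m : ℕ | ∃ S : Finset (Fin n × Fin (k+2)),
        IsCaterpillarForest (H.induce (S : Set (Fin n × Fin (k+2)))) ∧
        (∀ v, ((H.induce (S : Set (Fin n × Fin (k+2)))).neighborSet v).ncard ≤ k) ∧
        S.card = m} ((k + 1) * n) := by
  constructor
  · -- membership: take all leaves
    refine ⟨(Finset.univ : Finset (Fin n)) ×ˢ (Finset.univ.filter (fun i : Fin (k+2) => i ≠ 0)),
      ?_, ?_, ?_⟩
    all_goals {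
      set S₀ : Finset (Fin n × Fin (k+2)) :=
        (Finset.univ : Finset (Fin n)) ×ˢ (Finset.univ.filter (fun i : Fin (k+2) => i ≠ 0)) with hS₀
      have hne : ∀ p ∈ S₀, p.2 ≠ 0 := by
        intro p hp
        simp [hS₀, Finset.mem_product] at hp
        exact hp
      have hadj : ∀ a b : ↥(S₀ : Set (Fin n × Fin (k+2))),
          ¬ (H.induce (S₀ : Set (Fin n × Fin (k+2)))).Adj a b := by
        intro a b hab
        have h2 : H.Adj a.1 b.1 := hab
        rw [hH] at h2
        rcases h2 with ⟨_, h | h⟩ | ⟨_, h, _⟩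
        · exact hne _ a.2 h.1
        · exact hne _ b.2 h.2
        · exact hne _ a.2 h
      have hempty : ∀ a, (H.induce (S₀ : Set (Fin n × Fin (k+2)))).neighborSet a = ∅ := by
        intro a
        ext b
        simp only [SimpleGraph.mem_neighborSet, Set.mem_empty_iff_false, iff_false]
        exact hadj a b
      first
      | -- IsCaterpillarForest
        (constructor
         · intro v c hc
           cases c with
           | nil => exact hc.ne_nil rfl
           | cons h p => exact hadj _ _ h
         · intro v hv
           simp [hempty] at hv)
      | -- degree bound
        (intro v; simp [hempty])
      | -- cardinality
        (rw [hS₀, Finset.card_product, Finset.card_univ, Fintype.card_fin]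
         have hc : (Finset.univ.filter (fun i : Fin (k+2) => i ≠ 0)).card = k+1 := by
           rw [Finset.filter_ne', Finset.card_erase_of_mem (Finset.mem_univ _),
             Finset.card_univ, Fintype.card_fin]
           omega
         rw [hc]; ring)
      | skip
    }
  · -- upper bound
    rintro m ⟨S, hcf, hdeg, rfl⟩
    have key : ∀ v : Fin n, (S.filter (fun p => p.1 = v)).card ≤ k+1 := by
      intro v
      by_contra hcon
      push_neg at hcon
      have hall : ∀ i : Fin (k+2), (v, i) ∈ S := by
        have hinj : Set.InjOn Prod.snd ((S.filter (fun p => p.1 = v) : Finset (Fin n × Fin (k+2))) : Set (Fin n × Fin (k+2))) := by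
          intro p hp q hq hpq
          simp only [Finset.coe_filter, Set.mem_setOf_eq] at hp hq
          exact Prod.ext (hp.2.trans hq.2.symm) hpq
        have himg : ((S.filter (fun p => p.1 = v)).image Prod.snd) = Finset.univ := by
          apply Finset.eq_univ_of_card
          rw [Finset.card_image_of_injOn hinj]
          have hle : ((S.filter (fun p => p.1 = v)).image Prod.snd).card ≤ k+2 := by
            simpa using Finset.card_le_univ ((S.filter (fun p => p.1 = v)).image Prod.snd)
          rw [Finset.card_image_of_injOn hinj] at hle
          simp only [Fintype.card_fin]
          omega
        intro i
        have : i ∈ (S.filter (fun p => p.1 = v)).image Prod.snd := himg ▸ Finset.mem_univ i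
        obtain ⟨p, hp, hpi⟩ := Finset.mem_image.mp this
        simp only [Finset.mem_filter] at hp
        have : p = (v, i) := Prod.ext hp.2 hpi
        exact this ▸ hp.1
      -- the clique vertex (v,0) has ≥ k+1 neighbors
      have h0 : ((v, 0) : Fin n × Fin (k+2)) ∈ (S : Set (Fin n × Fin (k+2))) := hall 0
      set a : ↥(S : Set (Fin n × Fin (k+2))) := ⟨(v, 0), h0⟩ with ha
      have hf : ∀ i : Fin (k+1), (⟨(v, i.succ), hall i.succ⟩ : ↥(S : Set (Fin n × Fin (k+2)))) ∈
          (H.induce (S : Set (Fin n × Fin (k+2)))).neighborSet a := by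
        intro i
        show H.Adj (v, 0) (v, i.succ)
        rw [hH]
        exact Or.inl ⟨rfl, Or.inl ⟨rfl, (Fin.succ_ne_zero i)⟩⟩
      have hinj2 : Function.Injective
          (fun i : Fin (k+1) => (⟨⟨(v, i.succ), hall i.succ⟩, hf i⟩ :
            ↥((H.induce (S : Set (Fin n × Fin (k+2)))).neighborSet a))) := by
        intro i j hij
        have : (i.succ : Fin (k+2)) = j.succ := congrArg (fun x => (x.1.1.2 : Fin (k+2))) hij
        exact Fin.succ_injective _ this
      have hcard : k+1 ≤ ((H.induce (S : Set (Fin n × Fin (k+2)))).neighborSet a).ncard := by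
        rw [← Nat.card_coe_set_eq]
        calc k+1 = Nat.card (Fin (k+1)) := by simp
        _ ≤ _ := Nat.card_le_card_of_injective _ hinj2
      have := hdeg a
      omega
    calc S.card = ∑ v : Fin n, (S.filter (fun p => p.1 = v)).card :=
          Finset.card_eq_sum_card_fiberwise (fun p _ => Finset.mem_univ p.1)
      _ ≤ ∑ _v : Fin n, (k+1) := Finset.sum_le_sum (fun v _ => key v)
      _ = (k+1) * n := by simp [Finset.sum_const, Nat.mul_comm]
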